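/- If (R1,S1) is a Chu correspondence K1 → K2 and (R2,S2) is a Chu correspondence K2 → K3 between formal contexts, then (R2 ∘ R1, S1 ∘ S2) is a Chu correspondence K1 → K3, where (R2 ∘ R1)(g) := cl(R2(R1(g))) for g ∈ G1 (closure in K3) and (S1 ∘ S2)(m) := cl(S1(S2(m))) for m ∈ M3 (closure in K1). -/

import Mathlib

open Set

/-- A formal context `(G, M, I)`: a set of objects, a set of attributes,
and an incidence relation between them. -/
structure FormalContext where
  G : Type*
  M : Type*
  I : G → M → Prop

namespace FormalContext

variable (K : FormalContext)

/-- `A'` for a set of objects `A ⊆ G`. -/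
def polarG (A : Set K.G) : Set K.M := upperPolar K.I A

/-- `B'` for a set of attributes `B ⊆ M`. -/
def polarM (B : Set K.M) : Set K.G := lowerPolar K.I B

/-- The closure `cl(A) = A''` of a set of objects. -/
def clG (A : Set K.G) : Set K.G := K.polarM (K.polarG A)

/-- The closure `cl(B) = B''` of a set of attributes. -/
def clM (B : Set K.M) : Set K.M := K.polarG (K.polarM B)

/-- A set of objects is closed when it equals its closure. -/
def ClosedG (A : Set K.G) : Prop := K.clG A = A

/-- A set of attributes is closed when it equals its closure. -/
def ClosedM (B : Set K.M) : Prop := K.clM B = B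

/-- The dual context `K* = (M, G, I†)`. -/
def dual : FormalContext := ⟨K.M, K.G, fun m g => K.I g m⟩

/-- The direct product `K1 ⊗ K2` of formal contexts (Ganter–Wille). -/
def dprod (K1 K2 : FormalContext) : FormalContext :=
  ⟨K1.G × K2.G, K1.M × K2.M, fun g m => K1.I g.1 m.1 ∨ K2.I g.2 m.2⟩

end FormalContext

/-- The trivial context `I = ({⋆},{⋆},≠)`. -/
def trivCxt : FormalContext := ⟨PUnit, PUnit, fun a b => a ≠ b⟩

/-- The image `R(S)` of a set under a relation. -/
def relImage {X Y : Type*} (R : X → Y → Prop) (S : Set X) : Set Y :=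
  {y | ∃ x ∈ S, R x y}

/-- `R^•(T) = {x | R(x) ⊆ T}`. -/
def relDot {X Y : Type*} (R : X → Y → Prop) (T : Set Y) : Set X :=
  {x | ∀ y, R x y → y ∈ T}

/-- `R_•(S) = {y | ∀ x ∈ S, R(x,y)}`. -/
def relLower {X Y : Type*} (R : X → Y → Prop) (S : Set X) : Set Y :=
  {y | ∀ x ∈ S, R x y}

/-- A closed relation `K1 → K2`: each row `R(g)` is closed in `K2` and
`R^•` preserves closed sets. -/
structure IsClosedRel (K1 K2 : FormalContext) (R : K1.G → K2.G → Prop) : Prop where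
  row_closed : ∀ g : K1.G, K2.ClosedG (relImage R {g})
  dot_closed : ∀ Y : Set K2.G, K2.ClosedG Y → K1.ClosedG (relDot R Y)

/-- Composition of closed relations: `(S ∘ R)(g) := cl(S(R(g)))`, closure in `K`. -/
def relComp {X Y : Type*} (K : FormalContext) (S : Y → K.G → Prop) (R : X → Y → Prop) :
    X → K.G → Prop :=
  fun g h => h ∈ K.clG (relImage S (relImage R {g}))

/-- Composition on the attribute side: `(S ∘ R)(m) := cl(S(R(m)))`, closure on the
attribute side of `K`. -/
def relCompM {X Y : Type*} (K : FormalContext) (S : Y → K.M → Prop) (R : X → Y → Prop) :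
    X → K.M → Prop :=
  fun m n => n ∈ K.clM (relImage S (relImage R {m}))

/-- The identity closed relation on `K`: `g ↦ cl({g})`. -/
def idClosedRel (K : FormalContext) : K.G → K.G → Prop := fun g h => h ∈ K.clG {g}

/-- A Chu correspondence `(R,S) : K1 → K2`. -/
structure IsChu (K1 K2 : FormalContext) (R : K1.G → K2.G → Prop) (S : K2.M → K1.M → Prop) :
    Prop where
  extent_closed : ∀ g : K1.G, K2.ClosedG (relImage R {g})
  intent_closed : ∀ m : K2.M, K1.ClosedM (relImage S {m})
  adj : ∀ (g : K1.G) (m : K2.M),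
    (∀ h ∈ relImage R {g}, K2.I h m) ↔ (∀ n ∈ relImage S {m}, K1.I g n)

/-- The intent relation `R*(m) := (R^•(m'))'` of a (closed) relation `R`. -/
def starRel (K1 K2 : FormalContext) (R : K1.G → K2.G → Prop) : K2.M → K1.M → Prop :=
  fun m n => n ∈ K1.polarG (relDot R (K2.polarM {m}))

/-- A bond from `K1` to `K2`: a relation `B ⊆ G1 × M2` with closed rows and columns. -/
structure IsBond (K1 K2 : FormalContext) (B : K1.G → K2.M → Prop) : Prop where
  row_closed : ∀ g : K1.G, K2.ClosedM (relImage B {g})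
  col_closed : ∀ m : K2.M, K1.ClosedG {g | B g m}

/-- The tensor `(R1 ⊗ R2)(g1,g2) := cl(R1(g1) × R2(g2))` of relations, closure in `K3 ⊗ K4`. -/
def tensorRelMor (K3 K4 : FormalContext) {X Y : Type*}
    (R1 : X → K3.G → Prop) (R2 : Y → K4.G → Prop) :
    X × Y → (K3.dprod K4).G → Prop :=
  fun p q => q ∈ (K3.dprod K4).clG (relImage R1 {p.1} ×ˢ relImage R2 {p.2})

/-- The concept of `K` generated by a set of objects `A`: `(cl(A), A')`. -/
def conceptOfSet (K : FormalContext) (A : Set K.G) : Concept K.G K.M K.I where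
  extent := K.clG A
  intent := K.polarG A
  upperPolar_extent := upperPolar_lowerPolar_upperPolar K.I A
  lowerPolar_intent := rfl

/-- The sup-lattice map `ℬ(R)` on concept lattices induced by a relation:
`(A,A') ↦ (cl(R(A)), R(A)')`. -/
def conceptMap (K1 K2 : FormalContext) (R : K1.G → K2.G → Prop) :
    Concept K1.G K1.M K1.I → Concept K2.G K2.M K2.I :=
  fun c => conceptOfSet K2 (relImage R c.extent)

/-- The incidence relation of the context whose concept lattice is the concept tensor
`V1 ⊗ V2`: `(x,y) ∇ (w,z) iff x ≤ w or y ≤ z`. -/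
def tensorRel (V1 V2 : Type*) [CompleteLattice V1] [CompleteLattice V2] :
    V1 × V2 → V1 × V2 → Prop :=
  fun p q => p.1 ≤ q.1 ∨ p.2 ≤ q.2

/-- The concept tensor `V1 ⊗ V2` of complete lattices (Wille's tensor product). -/
abbrev ConceptTensor (V1 V2 : Type*) [CompleteLattice V1] [CompleteLattice V2] :=
  Concept (V1 × V2) (V1 × V2) (tensorRel V1 V2)

/-- The tensorial operation `x ⊼ y`: the concept with extent `cl{(x,y)}` and
intent `{(x,y)}'`. -/
def wedge {V1 V2 : Type*} [CompleteLattice V1] [CompleteLattice V2] (x : V1) (y : V2) :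
    ConceptTensor V1 V2 where
  extent := lowerPolar (tensorRel V1 V2) (upperPolar (tensorRel V1 V2) {(x, y)})
  intent := upperPolar (tensorRel V1 V2) {(x, y)}
  upperPolar_extent := upperPolar_lowerPolar_upperPolar _ _
  lowerPolar_intent := rfl

/-- Two subsets of a complete lattice are mutually distributive: all families indexed
by a set `ι` satisfy the two distributivity laws. -/
def MutuallyDistrib {M : Type u} [CompleteLattice M] (X Y : Set M) : Prop :=
  ∀ (ι : Type u) (x y : ι → M), (∀ i, x i ∈ X) → (∀ i, y i ∈ Y) →
    ((⨆ i, x i ⊓ y i) = ⨅ J : Set ι, ((⨆ j ∈ J, x j) ⊔ ⨆ k ∈ Jᶜ, y k)) ∧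
    ((⨅ i, x i ⊔ y i) = ⨆ J : Set ι, ((⨅ j ∈ J, x j) ⊓ ⨅ k ∈ Jᶜ, y k))

lemma relImage_singleton {X Y : Type*} (R : X → Y → Prop) (g : X) :
    relImage R {g} = {y | R g y} := by
  ext y; simp [relImage]

lemma clG_idem (K : FormalContext) (A : Set K.G) : K.ClosedG (K.clG A) := by
  unfold FormalContext.ClosedG FormalContext.clG FormalContext.polarM FormalContext.polarG
  rw [upperPolar_lowerPolar_upperPolar]

lemma clM_idem (K : FormalContext) (B : Set K.M) : K.ClosedM (K.clM B) := by
  unfold FormalContext.ClosedM FormalContext.clM FormalContext.polarM FormalContext.polarG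
  rw [lowerPolar_upperPolar_lowerPolar]

lemma forall_clG (K : FormalContext) (A : Set K.G) (m : K.M) :
    (∀ h ∈ K.clG A, K.I h m) ↔ (∀ h ∈ A, K.I h m) := by
  have : K.polarG (K.clG A) = K.polarG A :=
    upperPolar_lowerPolar_upperPolar K.I A
  constructor
  · intro H h hh; exact (this ▸ (fun _ ha => H _ ha : m ∈ K.polarG (K.clG A)) : m ∈ K.polarG A) hh
  · intro H h hh; exact (this.symm ▸ (fun _ ha => H _ ha : m ∈ K.polarG A) : m ∈ K.polarG (K.clG A)) hh

lemma forall_clM (K : FormalContext) (B : Set K.M) (g : K.G) :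
    (∀ n ∈ K.clM B, K.I g n) ↔ (∀ n ∈ B, K.I g n) := by
  have : K.polarM (K.clM B) = K.polarM B :=
    lowerPolar_upperPolar_lowerPolar (r := K.I) B
  constructor
  · intro H n hn; exact (this ▸ (fun _ hb => H _ hb : g ∈ K.polarM (K.clM B)) : g ∈ K.polarM B) hn
  · intro H n hn; exact (this.symm ▸ (fun _ hb => H _ hb : g ∈ K.polarM B) : g ∈ K.polarM (K.clM B)) hn

/-- Chu correspondences compose: if `(R1,S1) : K1 → K2` and
`(R2,S2) : K2 → K3` are Chu correspondences, so is `(R2 ∘ R1, S1 ∘ S2)`. -/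
theorem chu_comp (K1 K2 K3 : FormalContext)
    (R1 : K1.G → K2.G → Prop) (S1 : K2.M → K1.M → Prop)
    (R2 : K2.G → K3.G → Prop) (S2 : K3.M → K2.M → Prop)
    (h1 : IsChu K1 K2 R1 S1) (h2 : IsChu K2 K3 R2 S2) :
    IsChu K1 K3 (relComp K3 R2 R1) (relCompM K1 S1 S2) := by
  constructor
  · intro g
    have : relImage (relComp K3 R2 R1) {g} = K3.clG (relImage R2 (relImage R1 {g})) := by
      rw [relImage_singleton]; rfl
    rw [this]; exact clG_idem K3 _
  · intro m
    have : relImage (relCompM K1 S1 S2) {m} = K1.clM (relImage S1 (relImage S2 {m})) := by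
      rw [relImage_singleton]; rfl
    rw [this]; exact clM_idem K1 _
  · intro g m
    have e1 : relImage (relComp K3 R2 R1) {g} = K3.clG (relImage R2 (relImage R1 {g})) := by
      rw [relImage_singleton]; rfl
    have e2 : relImage (relCompM K1 S1 S2) {m} = K1.clM (relImage S1 (relImage S2 {m})) := by
      rw [relImage_singleton]; rfl
    rw [e1, e2, forall_clG, forall_clM]
    constructor
    · intro H n hn
      obtain ⟨n2, hn2, hSn⟩ := hn
      have key : ∀ n' ∈ relImage S2 {m}, ∀ g2 ∈ relImage R1 {g}, K2.I g2 n' := by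
        intro n' hn' g2 hg2
        have : ∀ g3 ∈ relImage R2 {g2}, K3.I g3 m := by
          intro g3 hg3
          obtain ⟨x, hx, hr⟩ : ∃ x ∈ ({g2} : Set K2.G), R2 x g3 := hg3
          rw [Set.mem_singleton_iff] at hx; rw [hx] at hr
          exact H g3 ⟨g2, hg2, hr⟩
        exact ((h2.adj g2 m).mp this) n' hn'
      have : ∀ g2 ∈ relImage R1 {g}, K2.I g2 n2 := key n2 hn2
      exact ((h1.adj g n2).mp this) n ⟨n2, rfl, hSn⟩
    · intro H h hh
      obtain ⟨g2, hg2, hr⟩ := hh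
      have key : ∀ n2 ∈ relImage S2 {m}, K2.I g2 n2 := by
        intro n2 hn2
        obtain ⟨x, hx, hs⟩ : ∃ x ∈ ({m} : Set K3.M), S2 x n2 := hn2
        rw [Set.mem_singleton_iff] at hx; rw [hx] at hs
        have : ∀ n ∈ relImage S1 {n2}, K1.I g n := by
          intro n hn
          obtain ⟨x, hx, hs1⟩ : ∃ x ∈ ({n2} : Set K2.M), S1 x n := hn
          rw [Set.mem_singleton_iff] at hx; rw [hx] at hs1
          exact H n ⟨n2, ⟨m, rfl, hs⟩, hs1⟩
        exact ((h1.adj g n2).mpr this) g2 hg2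
      exact ((h2.adj g2 m).mpr key) h ⟨g2, rfl, hr⟩
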